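/- Let α(z) = z/(1+√(1−z))² for z in the open unit disc. Then α is injective on the open unit disc, its image is a neighborhood of 0, and its inverse is given by α⁻¹(w) = 4w/(1+w)², i.e. α(4w/(1+w)²) = w for w in a neighborhood of 0. -/

import Mathlib

open Complex Metric

noncomputable def alphaMap (z : ℂ) : ℂ := z / (1 + (1 - z) ^ ((1 : ℂ) / 2)) ^ 2

/-!
Writing `s = √(1 - z)`, we have `z = 1 - s²` and hence `α(z) = (1 - s) / (1 + s)`: the map `α` is
the principal square root followed by a Cayley transform. Both are injective (the principal root
has nonnegative real part, so `1 + s ≠ 0`), hence so is `α`. Conversely, for `‖w‖ < 1` the point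
`t = (1 - w) / (1 + w)` lies in the right half-plane, where `√(t²) = t`; since
`1 - 4w / (1 + w)² = t²`, this gives `α(4w / (1 + w)²) = (1 - t) / (1 + t) = w`.
-/

lemma eq_of_one_sub_div_one_add_eq {K : Type*} [Field K] [NeZero (2 : K)] {a b : K}
    (ha : 1 + a ≠ 0) (hb : 1 + b ≠ 0) (h : (1 - a) / (1 + a) = (1 - b) / (1 + b)) : a = b := by
  rw [div_eq_div_iff ha hb] at h
  have h2 : (2 : K) * (a - b) = 0 := by linear_combination -h
  exact sub_eq_zero.1 ((mul_eq_zero.1 h2).resolve_left two_ne_zero)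

lemma one_add_ne_zero_of_norm_lt_one {R : Type*} [SeminormedRing R] [NormOneClass R] {w : R}
    (hw : ‖w‖ < 1) : 1 + w ≠ 0 := by
  intro h
  rw [eq_neg_of_add_eq_zero_right h, norm_neg, norm_one] at hw
  exact lt_irrefl 1 hw

namespace Complex

lemma one_add_cpow_inv_two_ne_zero (x : ℂ) : 1 + x ^ (2⁻¹ : ℂ) ≠ 0 := by
  intro h
  have hre : (x ^ (2⁻¹ : ℂ)).re = -1 := by
    simpa using congrArg re (eq_neg_of_add_eq_zero_right h)
  have := cpow_inv_two_re x
  linarith [Real.sqrt_nonneg ((‖x‖ + x.re) / 2)]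

lemma re_one_sub_div_one_add_pos {w : ℂ} (hw : ‖w‖ < 1) : 0 < ((1 - w) / (1 + w)).re := by
  have hw' := one_add_ne_zero_of_norm_lt_one hw
  have hnormSq : normSq w < 1 := by
    rw [normSq_eq_norm_sq]
    nlinarith [norm_nonneg w]
  rw [div_re, ← add_div]
  refine div_pos ?_ (normSq_pos.2 hw')
  simp only [normSq_apply, sub_re, sub_im, add_re, add_im, one_re, one_im] at hnormSq ⊢
  nlinarith

end Complex

lemma alphaMap_eq (z : ℂ) :
    alphaMap z = (1 - (1 - z) ^ (2⁻¹ : ℂ)) / (1 + (1 - z) ^ (2⁻¹ : ℂ)) := by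
  rw [alphaMap, one_div]
  have hs := one_add_cpow_inv_two_ne_zero (1 - z)
  have hz : z = 1 - ((1 - z) ^ (2⁻¹ : ℂ)) ^ 2 := by rw [cpow_ofNat_inv_pow]; ring
  generalize (1 - z) ^ (2⁻¹ : ℂ) = s at hs hz ⊢
  rw [div_eq_div_iff (pow_ne_zero 2 hs) hs, hz]
  ring

theorem alphaMap_injective : Function.Injective alphaMap := by
  intro z₁ z₂ h
  rw [alphaMap_eq, alphaMap_eq] at h
  have hs := eq_of_one_sub_div_one_add_eq (one_add_cpow_inv_two_ne_zero _)
    (one_add_cpow_inv_two_ne_zero _) h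
  have h1 : 1 - z₁ = 1 - z₂ := by rw [← cpow_ofNat_inv_pow (1 - z₁) 2, hs, cpow_ofNat_inv_pow]
  exact sub_right_injective h1

theorem alphaMap_four_mul_div_one_add_sq {w : ℂ} (hw : ‖w‖ < 1) :
    alphaMap (4 * w / (1 + w) ^ 2) = w := by
  have hw' := one_add_ne_zero_of_norm_lt_one hw
  have hsq : 1 - 4 * w / (1 + w) ^ 2 = ((1 - w) / (1 + w)) ^ 2 := by
    field_simp
    ring
  rw [alphaMap_eq, hsq, sq_cpow_two_inv (re_one_sub_div_one_add_pos hw)]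
  field_simp
  ring

theorem stmt4 :
    Set.InjOn alphaMap (Metric.ball (0 : ℂ) 1) ∧
    alphaMap '' Metric.ball (0 : ℂ) 1 ∈ nhds (0 : ℂ) ∧
    ∃ ε > (0 : ℝ), ∀ w : ℂ, ‖w‖ < ε → alphaMap (4 * w / (1 + w) ^ 2) = w := by
  refine ⟨alphaMap_injective.injOn, ?_, ⟨1, one_pos, fun w hw ↦ alphaMap_four_mul_div_one_add_sq hw⟩⟩
  have hcont : ContinuousAt (fun w : ℂ ↦ 4 * w / (1 + w) ^ 2) 0 :=
    (continuousAt_id.const_mul 4).div (by fun_prop) (by norm_num)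
  have hpreimage : (fun w : ℂ ↦ 4 * w / (1 + w) ^ 2) ⁻¹' ball 0 1 ∈ nhds (0 : ℂ) :=
    hcont (by simpa using ball_mem_nhds (0 : ℂ) one_pos)
  refine Filter.mem_of_superset (Filter.inter_mem (ball_mem_nhds 0 one_pos) hpreimage) ?_
  rintro w ⟨hw, hkw⟩
  exact ⟨_, hkw, alphaMap_four_mul_div_one_add_sq (mem_ball_zero_iff.1 hw)⟩
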